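/- (Theorem 5, safety-critical control of time delay systems via control barrier functionals) Let E be a real Banach space, τ > 0, m ∈ ℕ, 𝓕 : C([-τ,0], E) → E, and 𝓖 : C([-τ,0], E) → L(ℝᵐ, E). Let u : ℝ → ℝᵐ be a control signal and let x : ℝ → E be continuously differentiable satisfying the closed-loop dynamics ẋ(t) = 𝓕(x_t) + 𝓖(x_t)(u(t)) for all t ≥ 0, where x_t(θ) = x(t+θ). Let 𝓗 : C([-τ,0], E) → ℝ be Fréchet differentiable and let α : ℝ → ℝ be continuous, strictly increasing with α(0) = 0. Suppose the controller satisfies the control-barrier-functional condition along the solution: for all t ≥ 0, D𝓗(x_t)(ẋ_t) ≥ -α(𝓗(x_t)), where ẋ_t(θ) = x'(t+θ). If 𝓗(x_0) ≥ 0, then 𝓗(x_t) ≥ 0 for all t ≥ 0; that is, the safe set 𝓢 = {φ ∈ C([-τ,0], E) : 𝓗(φ) ≥ 0} is rendered forward invariant. -/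

import Mathlib

/-! The history curve `t ↦ x_t` is differentiable in `C([-τ,0], E)` with derivative `t ↦ ẋ_t`,
because it equals `x_0 + ∫₀ᵗ ẋ_s ds` and `s ↦ ẋ_s` is continuous. By the chain rule
`h t = 𝓗(x_t)` then satisfies `h' t ≥ -α(h t)`, which is nonnegative wherever `h t < 0`;
so on the interval after the last time `h` is nonnegative, `h` would be both negative and
nondecreasing, which is impossible. -/

/-- History segment `x_t ∈ C([-τ,0], E)` of a continuous curve `x : ℝ → E`,
defined by `x_t θ = x (t + θ)`. -/
noncomputable def histSegment {E : Type*} [NormedAddCommGroup E]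
    (τ : ℝ) (x : ℝ → E) (hx : Continuous x) (t : ℝ) :
    C(Set.Icc (-τ) (0 : ℝ), E) :=
  ⟨fun θ => x (t + θ), hx.comp (continuous_const.add continuous_subtype_val)⟩

open Set

section
variable {E : Type*} [NormedAddCommGroup E] {τ : ℝ} {x x' : ℝ → E}

theorem continuous_histSegment (hx : Continuous x) : Continuous (histSegment τ x hx) :=
  (ContinuousMap.curry ⟨fun p : ℝ × Icc (-τ) (0 : ℝ) => x (p.1 + p.2), by fun_prop⟩).continuous

variable [NormedSpace ℝ E] [CompleteSpace E]

theorem histSegment_eq_add_integral (hx : Continuous x) (hx' : Continuous x')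
    (hd : ∀ t, HasDerivAt x (x' t) t) (t : ℝ) :
    histSegment τ x hx t = histSegment τ x hx 0 + ∫ s in (0 : ℝ)..t, histSegment τ x' hx' s := by
  ext θ
  have hcomm := (ContinuousMap.evalCLM ℝ θ).intervalIntegral_comp_comm
    ((continuous_histSegment (τ := τ) hx').intervalIntegrable (μ := MeasureTheory.volume) 0 t)
  simp only [ContinuousMap.evalCLM_apply] at hcomm
  rw [ContinuousMap.add_apply, ← hcomm]
  simp only [histSegment, ContinuousMap.coe_mk]
  rw [intervalIntegral.integral_comp_add_right x',
    intervalIntegral.integral_eq_sub_of_hasDerivAt (fun r _ => hd r) (hx'.intervalIntegrable _ _)]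
  abel

theorem hasDerivAt_histSegment (hx : Continuous x) (hx' : Continuous x')
    (hd : ∀ t, HasDerivAt x (x' t) t) (t : ℝ) :
    HasDerivAt (histSegment τ x hx) (histSegment τ x' hx' t) t := by
  rw [funext (histSegment_eq_add_integral hx hx' hd)]
  exact ((continuous_histSegment hx').integral_hasStrictDerivAt 0 t).hasDerivAt.const_add _
end

theorem nonneg_of_hasDerivAt_nonneg_of_neg {h h' : ℝ → ℝ} (hd : ∀ t, HasDerivAt h (h' t) t)
    (hpos : ∀ t ≥ 0, h t < 0 → 0 ≤ h' t) (h0 : 0 ≤ h 0) {t : ℝ} (ht : 0 ≤ t) : 0 ≤ h t := by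
  by_contra! hneg
  have hcont : Continuous h := continuous_iff_continuousAt.2 fun r => (hd r).continuousAt
  set S := Icc 0 t ∩ h ⁻¹' Ici 0
  have hSbdd : BddAbove S := bddAbove_Icc.mono inter_subset_left
  have hsS : sSup S ∈ S :=
    (isClosed_Icc.inter (isClosed_Ici.preimage hcont)).csSup_mem ⟨0, left_mem_Icc.2 ht, h0⟩ hSbdd
  set s := sSup S
  have hneg_after : ∀ r ∈ Ioc s t, h r < 0 := fun r hr => by
    by_contra! hr'
    exact hr.1.not_ge (le_csSup hSbdd ⟨⟨hsS.1.1.trans hr.1.le, hr.2⟩, hr'⟩)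
  have hmono : MonotoneOn h (Icc s t) := by
    refine monotoneOn_of_hasDerivWithinAt_nonneg (convex_Icc s t) hcont.continuousOn
      (fun r _ => (hd r).hasDerivWithinAt) fun r hr => ?_
    rw [interior_Icc] at hr
    exact hpos r (hsS.1.1.trans hr.1.le) (hneg_after r ⟨hr.1, hr.2.le⟩)
  exact hneg.not_ge (hsS.2.trans (hmono ⟨le_rfl, hsS.1.2⟩ ⟨hsS.1.2, le_rfl⟩ hsS.1.2))

theorem statement10_general (E : Type*) [NormedAddCommGroup E] [NormedSpace ℝ E] [CompleteSpace E]
    (τ : ℝ)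
    (x x' : ℝ → E) (hx : Continuous x) (hx' : Continuous x')
    (hd : ∀ t : ℝ, HasDerivAt x (x' t) t)
    (H : C(Set.Icc (-τ) (0 : ℝ), E) → ℝ)
    (DH : C(Set.Icc (-τ) (0 : ℝ), E) → (C(Set.Icc (-τ) (0 : ℝ), E) →L[ℝ] ℝ))
    (hH : ∀ φ : C(Set.Icc (-τ) (0 : ℝ), E), HasFDerivAt H (DH φ) φ)
    (α : ℝ → ℝ) (hα_mono : StrictMono α) (hα0 : α 0 = 0)
    (hsafe : ∀ t ≥ (0 : ℝ),
      DH (histSegment τ x hx t) (histSegment τ x' hx' t) ≥ -α (H (histSegment τ x hx t)))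
    (h0 : H (histSegment τ x hx 0) ≥ 0) :
    ∀ t ≥ (0 : ℝ), H (histSegment τ x hx t) ≥ 0 := by
  intro t ht
  have hHx : ∀ s, HasDerivAt (fun s => H (histSegment τ x hx s))
      (DH (histSegment τ x hx s) (histSegment τ x' hx' s)) s :=
    fun s => (hH _).comp_hasDerivAt s (hasDerivAt_histSegment hx hx' hd s)
  refine nonneg_of_hasDerivAt_nonneg_of_neg hHx (fun s hs hneg => ?_) h0 ht
  have hα_nonpos : α (H (histSegment τ x hx s)) ≤ 0 := hα0 ▸ hα_mono.monotone hneg.le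
  linarith [hsafe s hs]

/-- Theorem 5: safety-critical control of time delay systems via control barrier
functionals. If `x` satisfies the closed loop `ẋ(t) = 𝓕(x_t) + 𝓖(x_t)(u(t))` for
`t ≥ 0`, `𝓗` is Fréchet differentiable, `α` is continuous, strictly increasing with
`α 0 = 0`, and along the solution the control-barrier-functional condition
`D𝓗(x_t)(ẋ_t) ≥ -α(𝓗(x_t))` holds for all `t ≥ 0`, then `𝓗(x_0) ≥ 0` implies
`𝓗(x_t) ≥ 0` for all `t ≥ 0`: the safe set is rendered forward invariant. -/
theorem statement10 (E : Type*) [NormedAddCommGroup E] [NormedSpace ℝ E] [CompleteSpace E]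
    (τ : ℝ) (hτ : 0 < τ) (m : ℕ)
    (F : C(Set.Icc (-τ) (0 : ℝ), E) → E)
    (G : C(Set.Icc (-τ) (0 : ℝ), E) → (EuclideanSpace ℝ (Fin m) →L[ℝ] E))
    (u : ℝ → EuclideanSpace ℝ (Fin m))
    (x x' : ℝ → E) (hx : Continuous x) (hx' : Continuous x')
    (hd : ∀ t : ℝ, HasDerivAt x (x' t) t)
    (hode : ∀ t ≥ (0 : ℝ),
      x' t = F (histSegment τ x hx t) + G (histSegment τ x hx t) (u t))
    (H : C(Set.Icc (-τ) (0 : ℝ), E) → ℝ)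
    (DH : C(Set.Icc (-τ) (0 : ℝ), E) → (C(Set.Icc (-τ) (0 : ℝ), E) →L[ℝ] ℝ))
    (hH : ∀ φ : C(Set.Icc (-τ) (0 : ℝ), E), HasFDerivAt H (DH φ) φ)
    (α : ℝ → ℝ) (hα_cont : Continuous α) (hα_mono : StrictMono α) (hα0 : α 0 = 0)
    (hsafe : ∀ t ≥ (0 : ℝ),
      DH (histSegment τ x hx t) (histSegment τ x' hx' t) ≥ -α (H (histSegment τ x hx t)))
    (h0 : H (histSegment τ x hx 0) ≥ 0) :
    ∀ t ≥ (0 : ℝ), H (histSegment τ x hx t) ≥ 0 :=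
  statement10_general E τ x x' hx hx' hd H DH hH α hα_mono hα0 hsafe h0
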